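/- Let U and V_n (n ∈ ℕ) be pairwise non-isomorphic selective ultrafilters on ℕ. Then the sum U-∑_n V_n is a Q-point: for every finite-to-one function f : ℕ×ℕ → ℕ there is a set X ∈ U-∑_n V_n on which f is one-to-one. -/

import Mathlib

/-!
Every set `{(n, m) | m ∈ C n}` with `C n ∈ V n` for all `n` lies in `U-∑ V n`,
so it suffices to find such sets on which `f` is injective. Selective ultrafilters are Q-points
and P-points, and each is isomorphic to its image under a finite-to-one map. Hence the images of
two non-isomorphic `V m`, `V n` under the column maps of `f` differ, which separates the columns
by sets with disjoint images; the P-point property turns these countably many separations into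
single sets `B n ∈ V n` on which the column maps are injective and whose images pairwise meet in
finite sets. Deleting from each column the finitely many points whose value is also taken in an
earlier column makes `f` injective. At most one `V n` is principal, and it is ranked first, so
nothing is deleted from it.
-/

/-- The `U`-indexed sum of the ultrafilters `V n`: a set `X ⊆ ℕ × ℕ` belongs to the sum
iff `{n | X(n) ∈ V n} ∈ U`, where `X(n)` is the `n`-th vertical section of `X`. -/
def sumUF (U : Ultrafilter ℕ) (V : ℕ → Ultrafilter ℕ) : Ultrafilter (ℕ × ℕ) :=
  U.bind fun n => (V n).map fun m => (n, m)

/-- `U` is selective: for every `f : ℕ → ℕ` there is `A ∈ U` on which `f` is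
one-to-one or constant. -/
def IsSelective (U : Ultrafilter ℕ) : Prop :=
  ∀ f : ℕ → ℕ, ∃ A ∈ U, Set.InjOn f A ∨ ∃ c, ∀ a ∈ A, f a = c

/-- Two ultrafilters on ℕ are (RK-)isomorphic iff a bijection of ℕ carries one to the other. -/
def RKIso (U V : Ultrafilter ℕ) : Prop :=
  ∃ e : ℕ ≃ ℕ, Ultrafilter.map (⇑e) U = V

open Set Filter Function

lemma mem_sumUF {U : Ultrafilter ℕ} {V : ℕ → Ultrafilter ℕ} {X : Set (ℕ × ℕ)} :
    X ∈ sumUF U V ↔ {n | {m | (n, m) ∈ X} ∈ V n} ∈ U :=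
  Iff.rfl

lemma RKIso.symm {U V : Ultrafilter ℕ} (h : RKIso U V) : RKIso V U := by
  obtain ⟨e, rfl⟩ := h
  exact ⟨e.symm, by rw [Ultrafilter.map_map, e.symm_comp_self, Ultrafilter.map_id]⟩

lemma RKIso.trans {U V W : Ultrafilter ℕ} (h₁ : RKIso U V) (h₂ : RKIso V W) : RKIso U W := by
  obtain ⟨e, rfl⟩ := h₁
  obtain ⟨e', rfl⟩ := h₂
  exact ⟨e.trans e', by rw [Ultrafilter.map_map]; rfl⟩

lemma rkIso_pure (a b : ℕ) : RKIso (pure a) (pure b) :=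
  ⟨Equiv.swap a b, by rw [Ultrafilter.map_pure, Equiv.swap_apply_left]⟩

lemma exists_perm_eqOn_of_injOn {α : Type*} [Countable α] {s : Set α} {h : α → α}
    (hinj : InjOn h s) (hs : sᶜ.Infinite) (hhs : (h '' s)ᶜ.Infinite) :
    ∃ e : Equiv.Perm α, EqOn e h s := by
  classical
  have := hs.to_subtype
  have := hhs.to_subtype
  let e' : ↥sᶜ ≃ ↥(h '' s)ᶜ := nonempty_equiv_of_countable.some
  refine ⟨(hinj.bijOn_image.equiv h).subtypeCongr e', fun x hx => ?_⟩
  simp [Equiv.subtypeCongr, hx, BijOn.equiv]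

lemma Ultrafilter.infinite_of_mem {α : Type*} {V : Ultrafilter α}
    (hV : (V : Filter α) ≤ cofinite) {A : Set α} (hA : A ∈ V) : A.Infinite :=
  fun hfin => Ultrafilter.compl_notMem_iff.2 hA (hV hfin.compl_mem_cofinite)

lemma Ultrafilter.exists_mem_subset_infinite_sdiff {α : Type*} {V : Ultrafilter α}
    (hV : (V : Filter α) ≤ cofinite) {A : Set α} (hA : A ∈ V) :
    ∃ S ∈ V, S ⊆ A ∧ (A \ S).Infinite := by
  obtain ⟨t, u, rfl, hdisj, hcard⟩ :=
    (infinite_of_mem hV hA).exists_union_disjoint_cardinal_eq_of_infinite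
  have htu : t.Infinite ↔ u.Infinite := by
    rw [← infinite_coe_iff, ← infinite_coe_iff, Cardinal.infinite_iff, Cardinal.infinite_iff,
      hcard]
  have hu : u.Infinite := (infinite_union.1 (infinite_of_mem hV hA)).elim htu.1 id
  rcases union_mem_iff.1 hA with ht | hu'
  · exact ⟨t, ht, subset_union_left,
      hu.mono fun x hx => ⟨subset_union_right hx, hdisj.notMem_of_mem_right hx⟩⟩
  · exact ⟨u, hu', subset_union_right,
      (htu.2 hu).mono fun x hx => ⟨subset_union_left hx, hdisj.notMem_of_mem_left hx⟩⟩

lemma rkIso_map_of_injOn {V : Ultrafilter ℕ} (hV : (V : Filter ℕ) ≤ cofinite) {h : ℕ → ℕ}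
    {A : Set ℕ} (hA : A ∈ V) (hinj : InjOn h A) : RKIso V (V.map h) := by
  obtain ⟨S, hS, hSA, hAS⟩ := Ultrafilter.exists_mem_subset_infinite_sdiff hV hA
  have hhS : (h '' S)ᶜ.Infinite := by
    refine (hAS.image (hinj.mono sdiff_subset)).mono ?_
    rintro _ ⟨x, hx, rfl⟩ ⟨y, hy, hyx⟩
    exact hx.2 (hinj (hSA hy) hx.1 hyx ▸ hy)
  obtain ⟨e, he⟩ := exists_perm_eqOn_of_injOn (hinj.mono hSA)
    (hAS.mono fun x hx => hx.2) hhS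
  refine ⟨e, Ultrafilter.coe_injective ?_⟩
  rw [Ultrafilter.coe_map, Ultrafilter.coe_map]
  exact map_congr (eventuallyEq_of_mem hS he)

namespace IsSelective

variable {V : Ultrafilter ℕ}

lemma exists_mem_injOn (hV : IsSelective V) {h : ℕ → ℕ} (hh : ∀ k, (h ⁻¹' {k}).Finite) :
    ∃ A ∈ V, InjOn h A := by
  obtain ⟨A, hA, hinj | ⟨c, hc⟩⟩ := hV h
  · exact ⟨A, hA, hinj⟩
  · obtain ⟨a, -, rfl⟩ := Ultrafilter.eq_pure_of_finite_mem ((hh c).subset hc) hA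
    exact ⟨{a}, rfl, injOn_singleton h a⟩

lemma exists_mem_forall_sdiff_finite (hV : IsSelective V) {A : ℕ → Set ℕ}
    (hA : ∀ k, A k ∈ V) : ∃ B ∈ V, ∀ k, (B \ A k).Finite := by
  classical
  rcases V.le_cofinite_or_eq_pure with hnp | ⟨a, rfl⟩
  swap
  · exact ⟨{a}, rfl, fun k => (finite_singleton a).subset sdiff_subset⟩
  -- `D` is a decreasing sequence in `V` with empty intersection; selectivity is applied to the
  -- index at which a point leaves it
  set D : ℕ → Set ℕ := fun k => (⋂ i ∈ Iic k, A i) \ Iic k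
  have hD : ∀ k, D k ∈ V := fun k =>
    sdiff_mem ((biInter_mem (finite_Iic k)).2 fun i _ => hA i)
      (hnp (finite_Iic k).compl_mem_cofinite)
  have hexit : ∀ x, ∃ k, x ∉ D k := fun x => ⟨x, fun hx => hx.2 self_mem_Iic⟩
  obtain ⟨B, hB, hinj | ⟨c, hc⟩⟩ := hV fun x => Nat.find (hexit x)
  · refine ⟨B, hB, fun k => ?_⟩
    refine Finite.of_finite_image ((finite_Iic k).subset ?_) (hinj.mono sdiff_subset)
    rintro _ ⟨x, hx, rfl⟩
    exact Nat.find_le fun hxD => hx.2 (mem_iInter₂.1 hxD.1 k self_mem_Iic)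
  · obtain ⟨x, hxB, hxD⟩ := Filter.nonempty_of_mem (inter_mem hB (hD c))
    exact absurd (hc x hxB ▸ hxD) (Nat.find_spec (hexit x))

lemma rkIso_map (hV : IsSelective V) {h : ℕ → ℕ} (hh : ∀ k, (h ⁻¹' {k}).Finite) :
    RKIso V (V.map h) := by
  rcases V.le_cofinite_or_eq_pure with hnp | ⟨a, rfl⟩
  · obtain ⟨A, hA, hinj⟩ := hV.exists_mem_injOn hh
    exact rkIso_map_of_injOn hnp hA hinj
  · rw [Ultrafilter.map_pure]
    exact rkIso_pure _ _

end IsSelective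

lemma exists_disjoint_image_of_not_rkIso {V W : Ultrafilter ℕ} (hVW : ¬RKIso V W)
    (hV : IsSelective V) (hW : IsSelective W) {g h : ℕ → ℕ}
    (hg : ∀ k, (g ⁻¹' {k}).Finite) (hh : ∀ k, (h ⁻¹' {k}).Finite) :
    ∃ S ∈ V, ∃ T ∈ W, Disjoint (g '' S) (h '' T) := by
  have hne : V.map g ≠ W.map h := fun heq =>
    hVW ((hV.rkIso_map hg).trans (heq ▸ (hW.rkIso_map hh).symm))
  obtain ⟨s, hs, t, ht, hst⟩ :=
    Filter.disjoint_iff.1 (Ultrafilter.disjoint_iff_not_le.2 (mt Ultrafilter.eq_of_le hne))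
  exact ⟨g ⁻¹' s, hs, h ⁻¹' t, ht,
    hst.mono (image_preimage_subset g s) (image_preimage_subset h t)⟩

lemma exists_forall_ne_le_cofinite {V : ℕ → Ultrafilter ℕ}
    (hVV : ∀ m n, m ≠ n → ¬RKIso (V m) (V n)) :
    ∃ a, ∀ n, n ≠ a → (V n : Filter ℕ) ≤ cofinite := by
  by_cases h : ∃ a, ¬(V a : Filter ℕ) ≤ cofinite
  · obtain ⟨a, ha⟩ := h
    refine ⟨a, fun n hn => by_contra fun hn' => ?_⟩
    obtain ⟨b, hb⟩ := (V a).le_cofinite_or_eq_pure.resolve_left ha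
    obtain ⟨c, hc⟩ := (V n).le_cofinite_or_eq_pure.resolve_left hn'
    exact hVV n a hn (hb ▸ hc ▸ rkIso_pure c b)
  · simp only [not_exists, not_not] at h
    exact ⟨0, fun n _ => h n⟩

lemma exists_injOn_finite_inter_image {V : ℕ → Ultrafilter ℕ} (hVsel : ∀ n, IsSelective (V n))
    (hVV : ∀ m n, m ≠ n → ¬RKIso (V m) (V n)) {g : ℕ → ℕ → ℕ}
    (hg : ∀ n k, (g n ⁻¹' {k}).Finite) :
    ∃ B : ℕ → Set ℕ, (∀ n, B n ∈ V n) ∧ (∀ n, InjOn (g n) (B n)) ∧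
      ∀ m n, m ≠ n → (g m '' B m ∩ g n '' B n).Finite := by
  choose A hA hinj using fun n => (hVsel n).exists_mem_injOn (hg n)
  have hsep : ∀ m n, ∃ S ∈ V m, ∃ T ∈ V n, m ≠ n → Disjoint (g m '' S) (g n '' T) := by
    intro m n
    by_cases hmn : m = n
    · exact ⟨univ, univ_mem, univ, univ_mem, fun h => absurd hmn h⟩
    · obtain ⟨S, hS, T, hT, hST⟩ :=
        exists_disjoint_image_of_not_rkIso (hVV m n hmn) (hVsel m) (hVsel n) (hg m) (hg n)
      exact ⟨S, hS, T, hT, fun _ => hST⟩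
  choose S hS T hT hST using hsep
  have hE : ∀ m n, S m n ∩ T n m ∈ V m := fun m n => inter_mem (hS m n) (hT n m)
  -- the P-point property makes a single set almost included in every `S m n ∩ T n m`
  choose B hB hBE using fun m => (hVsel m).exists_mem_forall_sdiff_finite (hE m)
  refine ⟨fun n => B n ∩ A n, fun n => inter_mem (hB n) (hA n),
    fun n => (hinj n).mono inter_subset_right, fun m n hmn => ?_⟩
  refine (((hBE m n).image (g m)).union ((hBE n m).image (g n))).subset ?_
  rintro _ ⟨⟨x, hx, rfl⟩, y, hy, hyx⟩
  by_cases hxE : x ∈ S m n ∩ T n m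
  · by_cases hyE : y ∈ S n m ∩ T m n
    · exact absurd ⟨y, hyE.2, hyx⟩ ((hST m n hmn).notMem_of_mem_left ⟨x, hxE.1, rfl⟩)
    · exact Or.inr ⟨y, ⟨hy.1, hyE⟩, hyx⟩
  · exact Or.inl ⟨x, ⟨hx.1, hxE⟩, rfl⟩

lemma exists_injOn_uncurry_of_finite_inter_image {ι α β : Type*} {r : ι → ℕ}
    (hr : Injective r) {g : ι → α → β} {B : ι → Set α} (hinj : ∀ i, InjOn (g i) (B i))
    (hfin : ∀ i j, i ≠ j → (g i '' B i ∩ g j '' B j).Finite) :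
    ∃ C : ι → Set α, (∀ i, (B i \ C i).Finite) ∧ (∀ i, r i = 0 → C i = B i) ∧
      InjOn (uncurry g) {p | p.2 ∈ C p.1} := by
  -- column `i` drops the finitely many values that columns of smaller rank also take
  set K : ι → Set β := fun i => ⋃ j ∈ r ⁻¹' Iio (r i), g j '' B j ∩ g i '' B i
  have hK : ∀ i, (K i).Finite := fun i =>
    ((finite_Iio (r i)).preimage hr.injOn).biUnion fun j hj =>
      hfin j i (ne_of_apply_ne r (Nat.ne_of_lt hj))
  refine ⟨fun i => B i \ g i ⁻¹' K i, fun i => ?_, fun i hi => ?_, ?_⟩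
  · rw [sdiff_sdiff_right_self]
    exact Finite.of_finite_image ((hK i).subset (image_subset_iff.2 inter_subset_right))
      ((hinj i).mono inter_subset_left)
  · simp [K, hi]
  · rintro ⟨i, x⟩ ⟨hx : x ∈ B i, hxK : g i x ∉ K i⟩ ⟨j, y⟩ ⟨hy : y ∈ B j, hyK : g j y ∉ K j⟩
      (hxy : g i x = g j y)
    obtain rfl | hij := eq_or_ne i j
    · rw [hinj i hx hy hxy]
    · rcases (hr.ne hij).lt_or_gt with hlt | hgt
      · exact (hyK (mem_iUnion₂.2 ⟨i, hlt, ⟨x, hx, hxy⟩, y, hy, rfl⟩)).elim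
      · exact (hxK (mem_iUnion₂.2 ⟨j, hgt, ⟨y, hy, hxy.symm⟩, x, hx, rfl⟩)).elim

lemma exists_forall_mem_injOn_uncurry {V : ℕ → Ultrafilter ℕ}
    (hVsel : ∀ n, IsSelective (V n)) (hVV : ∀ m n, m ≠ n → ¬RKIso (V m) (V n))
    {g : ℕ → ℕ → ℕ} (hg : ∀ n k, (g n ⁻¹' {k}).Finite) :
    ∃ C : ℕ → Set ℕ, (∀ n, C n ∈ V n) ∧ InjOn (uncurry g) {p | p.2 ∈ C p.1} := by
  obtain ⟨a, ha⟩ := exists_forall_ne_le_cofinite hVV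
  obtain ⟨B, hB, hinj, hfin⟩ := exists_injOn_finite_inter_image hVsel hVV hg
  -- ranking the only possibly principal column first leaves it untouched
  obtain ⟨C, hdiff, hCa, hC⟩ :=
    exists_injOn_uncurry_of_finite_inter_image (Equiv.swap a 0).injective hinj hfin
  refine ⟨C, fun n => ?_, hC⟩
  obtain rfl | hn := eq_or_ne n a
  · rw [hCa n (Equiv.swap_apply_left _ _)]
    exact hB n
  · refine mem_of_superset (sdiff_mem (hB n) (ha n hn (hdiff n).compl_mem_cofinite)) ?_
    rw [sdiff_sdiff_right_self]
    exact inter_subset_right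

theorem stmt3_general (U : Ultrafilter ℕ) (V : ℕ → Ultrafilter ℕ)
    (hVsel : ∀ n, IsSelective (V n))
    (hVV : ∀ m n, m ≠ n → ¬ RKIso (V m) (V n))
    (f : ℕ × ℕ → ℕ) (hf : ∀ k : ℕ, (f ⁻¹' {k}).Finite) :
    ∃ X ∈ sumUF U V, Set.InjOn f X := by
  obtain ⟨C, hC, hinj⟩ := exists_forall_mem_injOn_uncurry hVsel hVV (g := curry f)
    fun n k => (hf k).preimage (f := Prod.mk n) (Prod.mk_right_injective n).injOn
  exact ⟨{p | p.2 ∈ C p.1}, mem_sumUF.2 (univ_mem' hC), hinj⟩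

theorem stmt3 (U : Ultrafilter ℕ) (V : ℕ → Ultrafilter ℕ)
    (hUsel : IsSelective U) (hVsel : ∀ n, IsSelective (V n))
    (hUV : ∀ n, ¬ RKIso U (V n))
    (hVV : ∀ m n, m ≠ n → ¬ RKIso (V m) (V n))
    (f : ℕ × ℕ → ℕ) (hf : ∀ k : ℕ, (f ⁻¹' {k}).Finite) :
    ∃ X ∈ sumUF U V, Set.InjOn f X :=
  stmt3_general U V hVsel hVV f hf
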